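/- arXiv:1101.4927 — 10 statements merged into one kernel-verified Lean document; each statement's English description precedes it below -/
import Mathlib

section
/- If φ is a vertex of the Buneman graph B(Σ) and S ∈ Σ is a split with φ(S) inclusion-minimal in the image φ[Σ], then the map φ^S (obtained from φ by replacing φ(S) with its complement X−φ(S)) also satisfies condition (BG2), i.e., φ^S is a vertex of B(Σ). -/
open Set

variable {X : Type*}

/-- `S` is an `X`-split: a bipartition of `X` into two nonempty parts. -/
def IsSplit (S : Set (Set X)) : Prop :=
  ∃ A : Set X, A.Nonempty ∧ Aᶜ.Nonempty ∧ S = {A, Aᶜ}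

/-- Vertices of the Buneman graph `B(Σ)`: maps `φ : Σ → P(X)` with (BG1) `φ S ∈ S`
and (BG2) `φ S ∩ φ S' ≠ ∅`. -/
def IsVertex (SS : Set (Set (Set X))) (φ : Set (Set X) → Set X) : Prop :=
  (∀ S ∈ SS, φ S ∈ S) ∧ ∀ S ∈ SS, ∀ S' ∈ SS, (φ S ∩ φ S').Nonempty

/-- The difference set `Δ(φ,ψ) = {S ∈ Σ : φ S ≠ ψ S}`. -/
def Delta (SS : Set (Set (Set X))) (φ ψ : Set (Set X) → Set X) : Set (Set (Set X)) :=
  {S ∈ SS | φ S ≠ ψ S}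

/-- The Buneman graph: vertices at Hamming distance 1 are adjacent. -/
def BunemanGraph (SS : Set (Set (Set X))) :
    SimpleGraph {φ : Set (Set X) → Set X // IsVertex SS φ} :=
  SimpleGraph.fromRel (fun φ ψ => ∃ S, Delta SS φ.1 ψ.1 = {S})

/-- Two splits are compatible if one of the four pairwise intersections of parts is empty. -/
def Compatible (S S' : Set (Set X)) : Prop :=
  ∃ A ∈ S, ∃ A' ∈ S', A ∩ A' = ∅

/-- The incompatibility graph `Γ(Σ)`. -/
def IncompatGraph (SS : Set (Set (Set X))) : SimpleGraph SS :=
  SimpleGraph.fromRel (fun S S' => ¬ Compatible S.1 S'.1)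

/-- `φ S` is inclusion-minimal in the image `φ[Σ]`. -/
def MinInImage (SS : Set (Set (Set X))) (φ : Set (Set X) → Set X)
    (S : Set (Set X)) : Prop :=
  S ∈ SS ∧ ∀ T ∈ SS, φ T ⊆ φ S → φ T = φ S

/-- `φ` is a cut vertex of the Buneman graph: the induced subgraph on `V(Σ) − {φ}`
is disconnected. -/
def IsCutVertex (SS : Set (Set (Set X)))
    (φ : {φ : Set (Set X) → Set X // IsVertex SS φ}) : Prop :=
  ¬ (SimpleGraph.induce {ψ : {φ : Set (Set X) → Set X // IsVertex SS φ} | ψ ≠ φ}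
      (BunemanGraph SS)).Preconnected

lemma split_eq_of_mem {S T : Set (Set X)} (hS : IsSplit S) (hT : IsSplit T)
    {A : Set X} (hAS : A ∈ S) (hAT : A ∈ T) : S = T := by
  obtain ⟨B, -, -, rfl⟩ := hS
  obtain ⟨C, -, -, rfl⟩ := hT
  rcases hAS with rfl | rfl <;> rcases hAT with h | h
  · rw [h]
  · rw [h, compl_compl, Set.pair_comm]
  · rw [← h, compl_compl, Set.pair_comm]
  · rw [Set.mem_singleton_iff, compl_inj_iff] at h; rw [h]

lemma compl_mem_split {S : Set (Set X)} (hS : IsSplit S) {A : Set X} (hA : A ∈ S) :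
    Aᶜ ∈ S := by
  obtain ⟨B, -, -, rfl⟩ := hS
  rcases hA with rfl | rfl
  · right; rfl
  · left; rw [compl_compl]

lemma split_part_nonempty {S : Set (Set X)} (hS : IsSplit S) {A : Set X} (hA : A ∈ S) :
    A.Nonempty := by
  obtain ⟨B, hB, hBc, rfl⟩ := hS
  rcases hA with rfl | rfl <;> assumption

open Classical in
theorem stmt0 [Fintype X] (SS : Set (Set (Set X))) (hSSne : SS.Nonempty)
    (hsplits : ∀ S ∈ SS, IsSplit S)
    (φ : Set (Set X) → Set X) (hφ : IsVertex SS φ)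
    (S : Set (Set X)) (hS : S ∈ SS)
    (hmin : ∀ T ∈ SS, φ T ⊆ φ S → φ T = φ S) :
    IsVertex SS (fun T => if T = S then (φ S)ᶜ else φ T) := by
  have hkey : ∀ T ∈ SS, T ≠ S → ((φ S)ᶜ ∩ φ T).Nonempty := by
    intro T hT hTS
    by_contra h
    rw [Set.not_nonempty_iff_eq_empty] at h
    have hsub : φ T ⊆ φ S := by
      intro x hx
      by_contra hxS
      exact Set.eq_empty_iff_forall_notMem.mp h x ⟨hxS, hx⟩
    have heq : φ T = φ S := hmin T hT hsub
    exact hTS (split_eq_of_mem (hsplits T hT) (hsplits S hS)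
      (heq ▸ hφ.1 T hT) (hφ.1 S hS))
  constructor
  · intro T hT
    by_cases hTS : T = S
    · subst hTS
      simp only [if_pos rfl]
      exact compl_mem_split (hsplits T hT) (hφ.1 T hT)
    · simp only [if_neg hTS]
      exact hφ.1 T hT
  · intro T hT T' hT'
    by_cases hTS : T = S
    · subst hTS
      by_cases hTS' : T' = T
      · subst hTS'
        simp only [if_pos rfl, Set.inter_self]
        exact split_part_nonempty (hsplits T' hT')
          (compl_mem_split (hsplits T' hT') (hφ.1 T' hT'))
      · simp only [if_pos rfl, if_neg hTS']
        exact hkey T' hT' hTS'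
    · by_cases hTS' : T' = S
      · subst hTS'
        beta_reduce
        rw [if_neg hTS, if_pos rfl]
        obtain ⟨x, hx1, hx2⟩ := hkey T hT hTS
        exact ⟨x, hx2, hx1⟩
      · simp only [if_neg hTS, if_neg hTS']
        exact hφ.2 T hT T' hT'
end

section
/- For any two vertices φ, ψ of the Buneman graph B(Σ), the set φ[Δ(φ,ψ)] is an ideal in the poset (φ[Σ], ⊆): if A₁ ∈ φ[Δ(φ,ψ)], A₂ ∈ φ[Σ], and A₂ ⊆ A₁, then A₂ ∈ φ[Δ(φ,ψ)]. -/
open Set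

variable {X : Type*}

theorem stmt1 (SS : Set (Set (Set X))) (hsplits : ∀ S ∈ SS, IsSplit S)
    (φ ψ : Set (Set X) → Set X) (hφ : IsVertex SS φ) (hψ : IsVertex SS ψ)
    (A₁ A₂ : Set X) (hA₁ : A₁ ∈ φ '' Delta SS φ ψ) (hA₂ : A₂ ∈ φ '' SS)
    (hsub : A₂ ⊆ A₁) :
    A₂ ∈ φ '' Delta SS φ ψ := by
  obtain ⟨S₁, ⟨hS₁, hne₁⟩, rfl⟩ := hA₁
  obtain ⟨S₂, hS₂, rfl⟩ := hA₂
  refine ⟨S₂, ⟨hS₂, fun heq => ?_⟩, rfl⟩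
  -- ψ S₁ = (φ S₁)ᶜ
  obtain ⟨A, -, -, hSeq⟩ := hsplits S₁ hS₁
  have hφ1 := hφ.1 S₁ hS₁
  have hψ1 := hψ.1 S₁ hS₁
  rw [hSeq] at hφ1 hψ1
  have hcomp : ψ S₁ = (φ S₁)ᶜ := by
    rcases hφ1 with h1 | h1 <;> rcases hψ1 with h2 | h2 <;>
      simp_all [compl_compl]
  have := hψ.2 S₂ hS₂ S₁ hS₁
  rw [← heq, hcomp] at this
  obtain ⟨x, hx1, hx2⟩ := this
  exact hx2 (hsub hx1)
end

section
/- For any three vertices φ₁, φ₂, φ₃ of the Buneman graph B(Σ), the pointwise median med(φ₁,φ₂,φ₃), defined by med(φ₁,φ₂,φ₃)(S) = φ₁(S) if φ₁(S) ∈ {φ₂(S), φ₃(S)}, and φ₂(S) otherwise, is again a vertex of B(Σ), i.e., it satisfies condition (BG2). -/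
open Set

variable {X : Type*}

open Classical in
theorem stmt3 (SS : Set (Set (Set X))) (hsplits : ∀ S ∈ SS, IsSplit S)
    (φ₁ φ₂ φ₃ : Set (Set X) → Set X)
    (h₁ : IsVertex SS φ₁) (h₂ : IsVertex SS φ₂) (h₃ : IsVertex SS φ₃) :
    IsVertex SS (fun S => if φ₁ S = φ₂ S ∨ φ₁ S = φ₃ S then φ₁ S else φ₂ S) := by
  classical
  set μ := fun S => if φ₁ S = φ₂ S ∨ φ₁ S = φ₃ S then φ₁ S else φ₂ S with hμ
  -- majority claim
  have key : ∀ S ∈ SS, (μ S = φ₁ S ∧ μ S = φ₂ S) ∨ (μ S = φ₁ S ∧ μ S = φ₃ S) ∨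
      (μ S = φ₂ S ∧ μ S = φ₃ S) := by
    intro S hS
    by_cases h12 : φ₁ S = φ₂ S
    · left; constructor <;> simp [hμ, h12]
    by_cases h13 : φ₁ S = φ₃ S
    · right; left; constructor <;> simp [hμ, h13]
    · -- φ₂ S = φ₃ S since both differ from φ₁ S in a 2-element split
      obtain ⟨A, -, -, hSA⟩ := hsplits S hS
      have m1 := h₁.1 S hS
      have m2 := h₂.1 S hS
      have m3 := h₃.1 S hS
      rw [hSA] at m1 m2 m3
      have h23 : φ₂ S = φ₃ S := by
        rcases m1 with r1 | r1 <;> rcases m2 with r2 | r2 <;> rcases m3 with r3 | r3 <;>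
          simp_all
      right; right
      constructor
      · simp [hμ, h12, h13]
      · simp [hμ, h12, h13, h23]
  constructor
  · intro S hS
    rcases key S hS with ⟨e, -⟩ | ⟨e, -⟩ | ⟨e, -⟩
    · rw [e]; exact h₁.1 S hS
    · rw [e]; exact h₁.1 S hS
    · rw [e]; exact h₂.1 S hS
  · intro S hS S' hS'
    rcases key S hS with ⟨e1, e2⟩ | ⟨e1, e2⟩ | ⟨e1, e2⟩ <;>
      rcases key S' hS' with ⟨f1, f2⟩ | ⟨f1, f2⟩ | ⟨f1, f2⟩
    · rw [e1, f1]; exact h₁.2 S hS S' hS'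
    · rw [e1, f1]; exact h₁.2 S hS S' hS'
    · rw [e2, f1]; exact h₂.2 S hS S' hS'
    · rw [e1, f1]; exact h₁.2 S hS S' hS'
    · rw [e1, f1]; exact h₁.2 S hS S' hS'
    · rw [e2, f2]; exact h₃.2 S hS S' hS'
    · rw [e1, f2]; exact h₂.2 S hS S' hS'
    · rw [e2, f2]; exact h₃.2 S hS S' hS'
    · rw [e1, f1]; exact h₂.2 S hS S' hS'
end

section
/- Let Σ' ⊆ Σ be split systems on X. Then every ψ ∈ V(Σ') extends to some φ ∈ V(Σ) with φ restricted to Σ' equal to ψ. In particular, the restriction map V(Σ) → V(Σ') is surjective. -/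
open Set

variable {X : Type*}

theorem stmt6 [Fintype X] (SS SS' : Set (Set (Set X))) (hsub : SS' ⊆ SS)
    (hsplits : ∀ S ∈ SS, IsSplit S)
    (ψ : Set (Set X) → Set X) (hψ : IsVertex SS' ψ) :
    ∃ φ : Set (Set X) → Set X, IsVertex SS φ ∧ ∀ S ∈ SS', φ S = ψ S := by
  classical
  suffices h : ∀ n (T : Set (Set (Set X))), T ⊆ SS → (SS \ T).ncard = n →
      ∀ ψ : Set (Set X) → Set X, IsVertex T ψ →
      ∃ φ, IsVertex SS φ ∧ ∀ S ∈ T, φ S = ψ S from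
    h _ SS' hsub rfl ψ hψ
  intro n
  induction n using Nat.strong_induction_on with
  | _ n ih =>
    intro T hT hn ψ hψ
    rcases Set.eq_empty_or_nonempty (SS \ T) with he | ⟨S0, hS0⟩
    · have hST : SS = T := by
        apply subset_antisymm _ hT
        intro S hS
        by_contra hnot
        exact (Set.eq_empty_iff_forall_notMem.mp he S) ⟨hS, hnot⟩
      exact ⟨ψ, hST ▸ hψ, fun S _ => rfl⟩
    · obtain ⟨hS0SS, hS0T⟩ := hS0
      obtain ⟨B, hB, hBc, hSeq⟩ := hsplits S0 hS0SS
      have hBmem : B ∈ S0 := by rw [hSeq]; left; rfl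
      have hBcmem : Bᶜ ∈ S0 := by rw [hSeq]; right; rfl
      have claim : ∃ A ∈ S0, A.Nonempty ∧ ∀ S' ∈ T, (A ∩ ψ S').Nonempty := by
        by_contra hc
        push_neg at hc
        obtain ⟨S1, hS1T, hS1⟩ := hc B hBmem hB
        obtain ⟨S2, hS2T, hS2⟩ := hc Bᶜ hBcmem hBc
        obtain ⟨x, hx1, hx2⟩ := hψ.2 S1 hS1T S2 hS2T
        have hxB : x ∉ B := fun hxB =>
          Set.eq_empty_iff_forall_notMem.mp hS1 x ⟨hxB, hx1⟩
        exact Set.eq_empty_iff_forall_notMem.mp hS2 x ⟨hxB, hx2⟩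
      obtain ⟨A, hAmem, hAne, hAint⟩ := claim
      set ψ' : Set (Set X) → Set X := fun S => if S = S0 then A else ψ S with hψ'def
      have hψ'S0 : ψ' S0 = A := by simp [hψ'def]
      have hψ'other : ∀ S ∈ T, ψ' S = ψ S := by
        intro S hS
        have : S ≠ S0 := fun h => hS0T (h ▸ hS)
        simp [hψ'def, this]
      have hvert : IsVertex (insert S0 T) ψ' := by
        constructor
        · intro S hS
          rcases Set.mem_insert_iff.mp hS with rfl | hS
          · rw [hψ'S0]; exact hAmem
          · rw [hψ'other S hS]; exact hψ.1 S hS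
        · intro S hS S' hS'
          rcases Set.mem_insert_iff.mp hS with heq | hS <;>
            rcases Set.mem_insert_iff.mp hS' with heq' | hS'
          · rw [heq, heq', hψ'S0]; simpa using hAne
          · rw [heq, hψ'S0, hψ'other S' hS']; exact hAint S' hS'
          · rw [heq', hψ'S0, hψ'other S hS, Set.inter_comm]; exact hAint S hS
          · rw [hψ'other S hS, hψ'other S' hS']; exact hψ.2 S hS S' hS'
      have hsub' : insert S0 T ⊆ SS := Set.insert_subset hS0SS hT
      have hdiff : SS \ insert S0 T = (SS \ T) \ {S0} := by
        ext x; simp [Set.mem_diff, Set.mem_insert_iff]; tauto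
      have hfin : (SS \ T).Finite := Set.toFinite _
      have hmem : S0 ∈ SS \ T := ⟨hS0SS, hS0T⟩
      have hcard : (SS \ insert S0 T).ncard = n - 1 := by
        rw [hdiff, Set.ncard_diff_singleton_of_mem hmem, hn]
      have hpos : 0 < n := by
        rw [← hn]
        exact (Set.ncard_pos hfin).mpr ⟨S0, hmem⟩
      obtain ⟨φ, hφv, hφeq⟩ := ih (n - 1) (Nat.sub_lt hpos one_pos)
        (insert S0 T) hsub' hcard ψ' hvert
      refine ⟨φ, hφv, fun S hS => ?_⟩
      rw [hφeq S (Set.mem_insert_of_mem _ hS), hψ'other S hS]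
end

section
/- For any two distinct splits S, S' in a split system Σ, there exist vertices ψ, ψ' ∈ V(Σ) with S ∈ Δ(ψ,ψ') and S' ∈ Δ(ψ,ψ'). -/
open Set

variable {X : Type*}

/-- The map sending a split to its part containing `x`. -/
def phiAt (x : X) : Set (Set X) → Set X := fun T => ⋂₀ {B | B ∈ T ∧ x ∈ B}

lemma mem_phiAt (x : X) (T : Set (Set X)) : x ∈ phiAt x T := by
  intro B hB; exact hB.2

lemma phiAt_eq {x : X} {A : Set X} {T : Set (Set X)} (hT : T = {A, Aᶜ}) (hx : x ∈ A) :
    phiAt x T = A := by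
  subst hT
  have h : {B | B ∈ ({A, Aᶜ} : Set (Set X)) ∧ x ∈ B} = {A} := by
    ext B
    simp only [Set.mem_setOf_eq, Set.mem_insert_iff, Set.mem_singleton_iff]
    constructor
    · rintro ⟨h1 | h1, h2⟩
      · exact h1
      · subst h1; exact absurd hx h2
    · rintro rfl; exact ⟨Or.inl rfl, hx⟩
  rw [phiAt, h, Set.sInter_singleton]

lemma phiAt_eq_compl {x : X} {A : Set X} {T : Set (Set X)} (hT : T = {A, Aᶜ})
    (hx : x ∈ Aᶜ) : phiAt x T = Aᶜ := by
  apply phiAt_eq (A := Aᶜ) _ hx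
  rw [hT, compl_compl, Set.pair_comm]

lemma phiAt_isVertex (SS : Set (Set (Set X))) (hsplits : ∀ S ∈ SS, IsSplit S) (x : X) :
    IsVertex SS (phiAt x) := by
  constructor
  · intro T hT
    obtain ⟨A, _, _, hTe⟩ := hsplits T hT
    by_cases hx : x ∈ A
    · rw [phiAt_eq hTe hx, hTe]; exact Or.inl rfl
    · rw [phiAt_eq_compl hTe hx, hTe]; exact Or.inr rfl
  · intro T _ T' _
    exact ⟨x, mem_phiAt x T, mem_phiAt x T'⟩

theorem stmt7 [Fintype X] (SS : Set (Set (Set X))) (hsplits : ∀ S ∈ SS, IsSplit S)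
    (S S' : Set (Set X)) (hS : S ∈ SS) (hS' : S' ∈ SS) (hne : S ≠ S') :
    ∃ ψ ψ' : Set (Set X) → Set X, IsVertex SS ψ ∧ IsVertex SS ψ' ∧
      S ∈ Delta SS ψ ψ' ∧ S' ∈ Delta SS ψ ψ' := by
  obtain ⟨A, hA, hAc, hSe⟩ := hsplits S hS
  obtain ⟨A', hA', hA'c, hS'e⟩ := hsplits S' hS'
  have hAne : A ≠ Aᶜ := by
    obtain ⟨a, ha⟩ := hA
    intro h
    exact (h ▸ ha) ha
  have hA'ne : A' ≠ A'ᶜ := by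
    obtain ⟨a, ha⟩ := hA'
    intro h
    exact (h ▸ ha) ha
  -- find x, y separated by both splits
  have key : ∃ x y, x ∈ A ∧ y ∈ Aᶜ ∧
      ((x ∈ A' ∧ y ∈ A'ᶜ) ∨ (x ∈ A'ᶜ ∧ y ∈ A')) := by
    rcases (A ∩ A').eq_empty_or_nonempty with h1 | ⟨x, hx, hx'⟩
    · obtain ⟨x, hx⟩ := hA
      obtain ⟨y, hy⟩ := hA'
      refine ⟨x, y, hx, ?_, Or.inr ⟨?_, hy⟩⟩
      · intro hyA; exact (h1 ▸ (Set.mem_inter hyA hy) : (y : X) ∈ (∅ : Set X))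
      · intro hxA'; exact (h1 ▸ (Set.mem_inter hx hxA') : (x : X) ∈ (∅ : Set X))
    · rcases (Aᶜ ∩ A'ᶜ).eq_empty_or_nonempty with h2 | ⟨y, hy, hy'⟩
      · obtain ⟨y, hy⟩ := hA'c
        obtain ⟨z, hz⟩ := hAc
        have hyA : y ∈ A := by
          by_contra h
          exact (h2 ▸ (Set.mem_inter h hy) : (y : X) ∈ (∅ : Set X))
        have hzA' : z ∈ A' := by
          by_contra h
          exact (h2 ▸ (Set.mem_inter hz h) : (z : X) ∈ (∅ : Set X))
        exact ⟨y, z, hyA, hz, Or.inr ⟨hy, hzA'⟩⟩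
      · exact ⟨x, y, hx, hy, Or.inl ⟨hx', hy'⟩⟩
  obtain ⟨x, y, hxA, hyA, hcase⟩ := key
  refine ⟨phiAt x, phiAt y, phiAt_isVertex SS hsplits x, phiAt_isVertex SS hsplits y, ?_, ?_⟩
  · refine ⟨hS, ?_⟩
    rw [phiAt_eq hSe hxA, phiAt_eq_compl hSe hyA]
    exact hAne
  · refine ⟨hS', ?_⟩
    rcases hcase with ⟨hx', hy'⟩ | ⟨hx', hy'⟩
    · rw [phiAt_eq hS'e hx', phiAt_eq_compl hS'e hy']
      exact hA'ne
    · rw [phiAt_eq_compl hS'e hx', phiAt_eq hS'e hy']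
      exact hA'ne.symm
end

section
/- Let φ ∈ V(Σ). Two splits S, S' ∈ Σ^(φ) := {S ∈ Σ : φ(S) ∈ min(φ[Σ])} satisfy (X−φ(S)) ∩ (X−φ(S')) ≠ ∅ if and only if S and S' are incompatible. That is, the graph on Σ^(φ) with edges {S,S'} such that φ(S) ∪ φ(S') ≠ X equals the restriction of the incompatibility graph of Σ to Σ^(φ). -/
open Set

variable {X : Type*}

theorem stmt9 [Fintype X] (SS : Set (Set (Set X))) (hsplits : ∀ S ∈ SS, IsSplit S)
    (φ : Set (Set X) → Set X) (hφ : IsVertex SS φ)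
    (S S' : Set (Set X)) (hne : S ≠ S')
    (hS : MinInImage SS φ S) (hS' : MinInImage SS φ S') :
    ((φ S)ᶜ ∩ (φ S')ᶜ).Nonempty ↔ ¬ Compatible S S' := by
  have hSmem := hS.1
  have hS'mem := hS'.1
  obtain ⟨A, hA, hAc, hSeq⟩ := hsplits S hSmem
  obtain ⟨A', hA', hA'c, hS'eq⟩ := hsplits S' hS'mem
  have hφS : φ S ∈ S := hφ.1 S hSmem
  have hφS' : φ S' ∈ S' := hφ.1 S' hS'mem
  set P := φ S with hP
  set P' := φ S' with hP'
  have hSrep : S = {P, Pᶜ} := by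
    rw [hSeq] at hφS ⊢
    rcases hφS with h | h <;> rw [h] <;> simp [Set.pair_comm, compl_compl]
  have hS'rep : S' = {P', P'ᶜ} := by
    rw [hS'eq] at hφS' ⊢
    rcases hφS' with h | h <;> rw [h] <;> simp [Set.pair_comm, compl_compl]
  constructor
  · rintro hcc ⟨B, hB, B', hB', hBB'⟩
    have h1 : (P ∩ P').Nonempty := hφ.2 S hSmem S' hS'mem
    have h2 : (P ∩ P'ᶜ).Nonempty := by
      rw [Set.nonempty_iff_ne_empty, ← Set.diff_eq, Ne, Set.diff_eq_empty]
      intro hsub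
      have heq := hS'.2 S hSmem hsub
      rw [← hP, ← hP'] at heq
      exact hne (by rw [hSrep, hS'rep, heq])
    have h3 : (Pᶜ ∩ P').Nonempty := by
      rw [Set.nonempty_iff_ne_empty, Set.inter_comm, ← Set.diff_eq, Ne,
        Set.diff_eq_empty]
      intro hsub
      have heq := hS.2 S' hS'mem hsub
      rw [← hP, ← hP'] at heq
      exact hne (by rw [hSrep, hS'rep, heq])
    rw [hSrep] at hB
    rw [hS'rep] at hB'
    simp only [Set.mem_insert_iff, Set.mem_singleton_iff] at hB hB'
    rcases hB with rfl | rfl <;> rcases hB' with rfl | rfl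
    · exact h1.ne_empty hBB'
    · exact h2.ne_empty hBB'
    · exact h3.ne_empty hBB'
    · exact hcc.ne_empty hBB'
  · intro hnc
    rw [Set.nonempty_iff_ne_empty]
    intro h
    exact hnc ⟨Pᶜ, by rw [hSrep]; simp, P'ᶜ, by rw [hS'rep]; simp, h⟩
end

section
/- Let S and S' be distinct compatible X-splits. Then there exists a unique part A ∈ S such that A ∩ A' ≠ ∅ and A ∩ B' ≠ ∅ where S' = {A', B'}; denote it A(S↘S'). Moreover, for A ∈ S and A' ∈ S': A ∪ A' = X if and only if A = A(S↘S') and A' = A(S'↘S). -/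
open Set

variable {X : Type*}

lemma split_mem {S : Set (Set X)} (hS : IsSplit S) {C : Set X} (hC : C ∈ S) :
    C.Nonempty ∧ Cᶜ.Nonempty ∧ Cᶜ ∈ S ∧ S = {C, Cᶜ} := by
  obtain ⟨A, hA, hAc, rfl⟩ := hS
  rcases hC with rfl | hC
  · exact ⟨hA, hAc, Or.inr rfl, rfl⟩
  · rw [Set.mem_singleton_iff] at hC
    subst hC
    rw [compl_compl]
    exact ⟨hAc, hA, Or.inl rfl, Set.pair_comm _ _⟩

theorem stmt16 (S T : Set (Set X)) (hS : IsSplit S) (hT : IsSplit T)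
    (hne : S ≠ T) (hcomp : Compatible S T) :
    (∃! A, A ∈ S ∧ ∀ P ∈ T, (A ∩ P).Nonempty) ∧
    ∀ A ∈ S, ∀ A' ∈ T,
      (A ∪ A' = univ ↔
        ((∀ P ∈ T, (A ∩ P).Nonempty) ∧ ∀ P ∈ S, (A' ∩ P).Nonempty)) := by
  obtain ⟨C, hCS, C', hC'T, hCC'⟩ := hcomp
  obtain ⟨hCne, hCcne, hCcS, hSeq⟩ := split_mem hS hCS
  obtain ⟨hC'ne, hC'cne, hC'cT, hTeq⟩ := split_mem hT hC'T
  have hmemS : ∀ P ∈ S, C = P ∨ Cᶜ = P := by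
    intro P hP; rw [hSeq] at hP
    simp only [Set.mem_insert_iff, Set.mem_singleton_iff] at hP
    exact hP.imp Eq.symm Eq.symm
  have hmemT : ∀ P ∈ T, C' = P ∨ C'ᶜ = P := by
    intro P hP; rw [hTeq] at hP
    simp only [Set.mem_insert_iff, Set.mem_singleton_iff] at hP
    exact hP.imp Eq.symm Eq.symm
  have hsub : C ⊆ C'ᶜ := fun x hx hx' => by
    have : x ∈ C ∩ C' := ⟨hx, hx'⟩
    rw [hCC'] at this; exact this
  have hsub' : C' ⊆ Cᶜ := fun x hx hx' => by
    have : x ∈ C ∩ C' := ⟨hx', hx⟩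
    rw [hCC'] at this; exact this
  have hne1 : C ≠ C'ᶜ := by
    rintro rfl
    apply hne
    rw [hSeq, hTeq, compl_compl, Set.pair_comm]
  have hcc : (Cᶜ ∩ C'ᶜ).Nonempty := by
    by_contra h
    rw [Set.not_nonempty_iff_eq_empty] at h
    apply hne1
    apply Set.Subset.antisymm hsub
    intro x hx
    by_contra hxC
    have : x ∈ Cᶜ ∩ C'ᶜ := ⟨hxC, hx⟩
    rw [h] at this; exact this
  have hAok : ∀ P ∈ T, (Cᶜ ∩ P).Nonempty := by
    intro P hP
    rcases hmemT P hP with rfl | rfl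
    · obtain ⟨x, hx⟩ := hC'ne
      exact ⟨x, hsub' hx, hx⟩
    · exact hcc
  have hA'ok : ∀ P ∈ S, (C'ᶜ ∩ P).Nonempty := by
    intro P hP
    rcases hmemS P hP with rfl | rfl
    · obtain ⟨x, hx⟩ := hCne
      exact ⟨x, hsub hx, hx⟩
    · obtain ⟨x, hx1, hx2⟩ := hcc
      exact ⟨x, hx2, hx1⟩
  have hCbad : ¬ ∀ P ∈ T, (C ∩ P).Nonempty := by
    intro h
    obtain ⟨x, hx⟩ := h C' hC'T
    rw [hCC'] at hx; exact hx
  have hC'bad : ¬ ∀ P ∈ S, (C' ∩ P).Nonempty := by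
    intro h
    obtain ⟨x, hx1, hx2⟩ := h C hCS
    have : x ∈ C ∩ C' := ⟨hx2, hx1⟩
    rw [hCC'] at this; exact this
  constructor
  · refine ⟨Cᶜ, ⟨hCcS, hAok⟩, ?_⟩
    rintro A ⟨hAS, hA⟩
    rcases hmemS A hAS with rfl | rfl
    · exact absurd hA hCbad
    · rfl
  · intro A hAS A' hA'T
    constructor
    · intro huniv
      rcases hmemS A hAS with rfl | rfl <;> rcases hmemT A' hA'T with rfl | rfl
      · exfalso
        obtain ⟨x, hx1, hx2⟩ := hcc
        have : x ∈ C ∪ C' := huniv ▸ Set.mem_univ x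
        rcases this with h | h
        exacts [hx1 h, hx2 h]
      · exfalso
        obtain ⟨x, hx⟩ := hC'ne
        have : x ∈ C ∪ C'ᶜ := huniv ▸ Set.mem_univ x
        rcases this with h | h
        · exact hsub' hx h
        · exact h hx
      · exfalso
        obtain ⟨x, hx⟩ := hCne
        have : x ∈ Cᶜ ∪ C' := huniv ▸ Set.mem_univ x
        rcases this with h | h
        · exact h hx
        · exact hsub hx h
      · exact ⟨hAok, hA'ok⟩
    · rintro ⟨h1, h2⟩
      rcases hmemS A hAS with rfl | rfl
      · exact absurd h1 hCbad
      rcases hmemT A' hA'T with rfl | rfl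
      · exact absurd h2 hC'bad
      rw [← Set.compl_inter, hCC', Set.compl_empty]
end

section
/- Let S, S', S'' be three distinct X-splits such that S is compatible with both S' and S'', and S' and S'' are incompatible. Then A(S↘S') = A(S↘S''), where A(S↘T) denotes the unique part of S that meets both parts of T. -/
open Set

variable {X : Type*}

lemma pair_mem_cases {α : Type*} {B x : Set α} (h : x ∈ ({B, Bᶜ} : Set (Set α))) :
    x = B ∨ x = Bᶜ := h

lemma pair_other {α : Type*} {B A A' P : Set α}
    (hA : A ∈ ({B, Bᶜ} : Set (Set α))) (hA' : A' ∈ ({B, Bᶜ} : Set (Set α)))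
    (hP : P ∈ ({B, Bᶜ} : Set (Set α))) (hne : A ≠ A') (hPA : P ≠ A) : P = A' := by
  rcases pair_mem_cases hA with rfl | rfl <;> rcases pair_mem_cases hA' with rfl | rfl <;>
    rcases pair_mem_cases hP with rfl | rfl <;> first | rfl | exact absurd rfl hne |
      exact absurd rfl hPA

lemma pair_compl {α : Type*} {B A A' : Set α}
    (hA : A ∈ ({B, Bᶜ} : Set (Set α))) (hA' : A' ∈ ({B, Bᶜ} : Set (Set α)))
    (hne : A ≠ A') : A' = Aᶜ := by
  rcases pair_mem_cases hA with rfl | rfl <;> rcases pair_mem_cases hA' with rfl | rfl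
  · exact absurd rfl hne
  · rfl
  · exact (compl_compl _).symm
  · exact absurd rfl hne

theorem stmt17 (S S' S'' : Set (Set X))
    (hS : IsSplit S) (hS' : IsSplit S') (hS'' : IsSplit S'')
    (h₁ : S ≠ S') (h₂ : S ≠ S'') (h₃ : S' ≠ S'')
    (c₁ : Compatible S S') (c₂ : Compatible S S'') (hinc : ¬ Compatible S' S'') :
    ∀ A ∈ S, ∀ A' ∈ S, (∀ P ∈ S', (A ∩ P).Nonempty) →
      (∀ P ∈ S'', (A' ∩ P).Nonempty) → A = A' := by
  intro A hA A' hA' hAmeets hA'meets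
  by_contra hne
  obtain ⟨B, -, -, hSeq⟩ := hS
  rw [hSeq] at hA hA'
  have hcc : A' = Aᶜ := pair_compl hA hA' hne
  obtain ⟨P, hP, Q, hQ, hPQ⟩ := c₂
  rw [hSeq] at hP
  have hPA : P = A := by
    by_contra hPA
    have : P = A' := pair_other hA hA' hP hne hPA
    obtain ⟨x, hx⟩ := hA'meets Q hQ
    exact absurd hPQ (by rw [this]; exact Set.nonempty_iff_ne_empty.mp ⟨x, hx⟩)
  obtain ⟨P', hP', Q', hQ', hPQ'⟩ := c₁
  rw [hSeq] at hP'
  have hP'A : P' = A' := by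
    by_contra hP'A
    have : P' = A := pair_other hA' hA hP' (Ne.symm hne) hP'A
    obtain ⟨x, hx⟩ := hAmeets Q' hQ'
    exact absurd hPQ' (by rw [this]; exact Set.nonempty_iff_ne_empty.mp ⟨x, hx⟩)
  apply hinc
  refine ⟨Q', hQ', Q, hQ, ?_⟩
  have h1 : Q' ⊆ A := by
    intro x hx
    by_contra hxA
    have hxA' : x ∈ A' := by rw [hcc]; exact hxA
    rw [hP'A] at hPQ'
    exact absurd hPQ' (Set.nonempty_iff_ne_empty.mp ⟨x, hxA', hx⟩)
  have h2 : Q ⊆ Aᶜ := by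
    intro x hx hxA
    rw [hPA] at hPQ
    exact absurd hPQ (Set.nonempty_iff_ne_empty.mp ⟨x, hxA, hx⟩)
  ext x
  simp only [Set.mem_inter_iff, Set.mem_empty_iff_false, iff_false]
  rintro ⟨h1', h2'⟩
  exact h2 h2' (h1 h1')
end

section
/- Let Σ₀ be a connected component of the incompatibility graph Γ(Σ). For φ ∈ V(Σ₀), define φ̃: Σ → P(X) by φ̃(S) = φ(S) for S ∈ Σ₀ and φ̃(S) = A(S↘Σ₀) otherwise, where A(S↘Σ₀) is the common value of A(S↘S') over all S' ∈ Σ₀. Then φ̃ ∈ V(Σ), and Δ(φ̃, ψ̃) = Δ(φ,ψ) for all φ, ψ ∈ V(Σ₀); in particular, the map φ ↦ φ̃ is an injective isometric embedding of B(Σ₀) into B(Σ). -/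
open Set

variable {X : Type*}

open Classical in
theorem stmt18 [Fintype X] (SS : Set (Set (Set X))) (hsplits : ∀ S ∈ SS, IsSplit S)
    (C : (IncompatGraph SS).ConnectedComponent) (SS₀ : Set (Set (Set X)))
    (hSS₀ : SS₀ = {S | ∃ h : S ∈ SS,
      (IncompatGraph SS).connectedComponentMk ⟨S, h⟩ = C})
    (a : Set (Set X) → Set X)
    (ha : ∀ S ∈ SS, S ∉ SS₀ →
      a S ∈ S ∧ ∀ S' ∈ SS₀, ∀ P ∈ S', (a S ∩ P).Nonempty)
    (φ ψ : Set (Set X) → Set X) (hφ : IsVertex SS₀ φ) (hψ : IsVertex SS₀ ψ) :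
    IsVertex SS (fun S => if S ∈ SS₀ then φ S else a S) ∧
    Delta SS (fun S => if S ∈ SS₀ then φ S else a S)
      (fun S => if S ∈ SS₀ then ψ S else a S) = Delta SS₀ φ ψ := by
  
  have hsub : SS₀ ⊆ SS := by
    intro S hS
    rw [hSS₀] at hS
    exact hS.1
  obtain ⟨v, hv⟩ := C.exists_rep
  have hT0 : v.1 ∈ SS₀ := by
    rw [hSS₀]
    exact ⟨v.2, hv⟩
  -- S outside SS₀ is compatible with every member of SS₀
  have hcompat : ∀ S ∈ SS, S ∉ SS₀ → ∀ T ∈ SS₀, Compatible S T := by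
    intro S hS hS0 T hT
    by_contra hc
    have hTSS : T ∈ SS := hsub hT
    have hTC : (IncompatGraph SS).connectedComponentMk ⟨T, hTSS⟩ = C := by
      rw [hSS₀] at hT
      obtain ⟨h, h2⟩ := hT
      exact h2
    have hne : S ≠ T := by
      intro h; exact hS0 (h ▸ hT)
    have hadj : (IncompatGraph SS).Adj ⟨S, hS⟩ ⟨T, hTSS⟩ := by
      apply SimpleGraph.fromRel_adj _ _ _ |>.mpr
      exact ⟨by simp [hne], Or.inl hc⟩
    apply hS0
    rw [hSS₀]
    refine ⟨hS, ?_⟩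
    rw [← hTC]
    exact SimpleGraph.ConnectedComponent.sound hadj.reachable
  -- a S and a S' intersect for S, S' outside SS₀
  have haa : ∀ S ∈ SS, S ∉ SS₀ → ∀ S' ∈ SS, S' ∉ SS₀ → (a S ∩ a S').Nonempty := by
    intro S hS hS0 S' hS' hS0'
    obtain ⟨A₁, hA₁S, P₁, hP₁, hdisj⟩ := hcompat S hS hS0 v.1 hT0
    obtain ⟨B, hB, hBc, hSeq⟩ := hsplits S hS
    have haS := (ha S hS hS0).1
    -- a S meets P₁, so A₁ ≠ a S
    have hmeet : (a S ∩ P₁).Nonempty := (ha S hS hS0).2 v.1 hT0 P₁ hP₁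
    have hA₁ : A₁ = (a S)ᶜ := by
      rw [hSeq] at hA₁S haS
      rcases hA₁S with h1 | h1 <;> rcases haS with h2 | h2 <;>
        simp_all [Set.not_nonempty_iff_eq_empty]
    -- so (a S)ᶜ ∩ P₁ = ∅
    rw [hA₁] at hdisj
    by_contra hcon
    rw [Set.not_nonempty_iff_eq_empty] at hcon
    have hsub' : a S' ⊆ (a S)ᶜ := by
      intro x hx hxa
      have hmem : x ∈ a S ∩ a S' := ⟨hxa, hx⟩
      rw [hcon] at hmem
      exact hmem
    have hemp : (a S' ∩ P₁) = ∅ := by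
      apply Set.eq_empty_of_subset_empty
      intro x hx
      rw [← hdisj]
      exact ⟨hsub' hx.1, hx.2⟩
    have hne := (ha S' hS' hS0').2 v.1 hT0 P₁ hP₁
    rw [hemp] at hne
    exact Set.not_nonempty_empty hne
  constructor
  · constructor
    · intro S hS
      by_cases h : S ∈ SS₀
      · simp only [h, if_pos]
        exact hφ.1 S h
      · simp only [h, if_neg, if_false]
        exact (ha S hS h).1
    · intro S hS S' hS'
      by_cases h : S ∈ SS₀ <;> by_cases h' : S' ∈ SS₀ <;>
        simp only [h, h', if_pos, if_neg, if_true, if_false]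
      · exact hφ.2 S h S' h'
      · have := (ha S' hS' h').2 S h (φ S) (hφ.1 S h)
        rwa [Set.inter_comm] at this
      · exact (ha S hS h).2 S' h' (φ S') (hφ.1 S' h')
      · exact haa S hS h S' hS' h'
  · ext S
    simp only [Delta, Set.mem_setOf_eq]
    by_cases h : S ∈ SS₀
    · simp only [h, if_pos]
      constructor
      · rintro ⟨_, h2⟩; exact ⟨trivial, h2⟩
      · rintro ⟨_, h2⟩; exact ⟨hsub h, h2⟩
    · simp [h]
end

section
/- Let Σ₀ be a connected component of the incompatibility graph Γ(Σ), and let B(Σ₀) := {φ ∈ V(Σ) : φ(S) = A(S↘Σ₀) for all S ∈ Σ−Σ₀}. Then for every φ ∈ V(Σ), the map φ_{Σ₀} defined by φ_{Σ₀}(S) = φ(S) for S ∈ Σ₀ and φ_{Σ₀}(S) = A(S↘Σ₀) otherwise, belongs to B(Σ₀) and is a gate for φ in B(Σ₀): D(φ,ψ) = D(φ,φ_{Σ₀}) + D(φ_{Σ₀},ψ) for every ψ ∈ B(Σ₀), where D denotes Hamming distance |Δ(·,·)|. -/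
open Set

variable {X : Type*}

open Classical in
theorem stmt19 [Fintype X] (SS : Set (Set (Set X))) (hsplits : ∀ S ∈ SS, IsSplit S)
    (C : (IncompatGraph SS).ConnectedComponent) (SS₀ : Set (Set (Set X)))
    (hSS₀ : SS₀ = {S | ∃ h : S ∈ SS,
      (IncompatGraph SS).connectedComponentMk ⟨S, h⟩ = C})
    (a : Set (Set X) → Set X)
    (ha : ∀ S ∈ SS, S ∉ SS₀ →
      a S ∈ S ∧ ∀ S' ∈ SS₀, ∀ P ∈ S', (a S ∩ P).Nonempty)
    (φ : Set (Set X) → Set X) (hφ : IsVertex SS φ) :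
    IsVertex SS (fun S => if S ∈ SS₀ then φ S else a S) ∧
    (∀ S ∈ SS, S ∉ SS₀ → (fun S => if S ∈ SS₀ then φ S else a S) S = a S) ∧
    ∀ ψ : Set (Set X) → Set X, IsVertex SS ψ → (∀ S ∈ SS, S ∉ SS₀ → ψ S = a S) →
      (Delta SS φ ψ).ncard =
        (Delta SS φ (fun S => if S ∈ SS₀ then φ S else a S)).ncard +
        (Delta SS (fun S => if S ∈ SS₀ then φ S else a S) ψ).ncard := by
  classical
  set φ₀ : Set (Set X) → Set X := fun S => if S ∈ SS₀ then φ S else a S with hφ₀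
  -- SS₀ ⊆ SS
  have hsub : SS₀ ⊆ SS := by
    intro S hS; rw [hSS₀] at hS; exact hS.1
  -- key: for S ∈ SS, S ∉ SS₀, T ∈ SS₀: some part of T is contained in a S
  have key : ∀ S ∈ SS, S ∉ SS₀ → ∀ T ∈ SS₀, ∃ P ∈ T, P ⊆ a S := by
    intro S hS hS0 T hT0
    have hT : T ∈ SS := hsub hT0
    -- S and T are compatible
    have hcompat : Compatible S T := by
      by_contra hc
      have hadj : (IncompatGraph SS).Adj ⟨S, hS⟩ ⟨T, hT⟩ := by
        refine ⟨?_, Or.inl hc⟩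
        intro h
        apply hS0
        have : S = T := congrArg Subtype.val h
        rw [this]; exact hT0
      have hreach := hadj.reachable
      have heq : (IncompatGraph SS).connectedComponentMk ⟨S, hS⟩ =
          (IncompatGraph SS).connectedComponentMk ⟨T, hT⟩ :=
        SimpleGraph.ConnectedComponent.sound hreach
      apply hS0
      rw [hSS₀]
      refine ⟨hS, ?_⟩
      rw [heq]
      rw [hSS₀] at hT0
      obtain ⟨h', hC⟩ := hT0
      exact hC
    obtain ⟨A₁, hA₁, P₁, hP₁, hdisj⟩ := hcompat
    have hmeet := (ha S hS hS0).2 T hT0 P₁ hP₁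
    have hne : A₁ ≠ a S := by
      intro h; rw [h] at hdisj
      exact hmeet.ne_empty hdisj
    obtain ⟨A, hAne, hAcne, hST⟩ := hsplits S hS
    have hA₁' : A₁ = A ∨ A₁ = Aᶜ := by rw [hST] at hA₁; simpa using hA₁
    have haS' : a S = A ∨ a S = Aᶜ := by
      have h : a S ∈ ({A, Aᶜ} : Set (Set X)) := by rw [← hST]; exact (ha S hS hS0).1
      simpa using h
    have hPsub : P₁ ⊆ a S := by
      rcases hA₁' with h1 | h1 <;> rcases haS' with h2 | h2
      · exact absurd (h1.trans h2.symm) hne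
      · rw [h1] at hdisj; rw [h2]
        intro x hx hxA
        exact Set.eq_empty_iff_forall_notMem.mp hdisj x ⟨hxA, hx⟩
      · rw [h1] at hdisj; rw [h2]
        intro x hx
        by_contra hxc
        exact Set.eq_empty_iff_forall_notMem.mp hdisj x ⟨not_not.mp (by simpa using hxc), hx⟩
      · exact absurd (h1.trans h2.symm) hne
    exact ⟨P₁, hP₁, hPsub⟩
  -- SS₀ is nonempty
  obtain ⟨v, hv⟩ := C.exists_rep
  have hv0 : v.1 ∈ SS₀ := by
    rw [hSS₀]
    exact ⟨v.2, hv⟩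
  -- a S ∩ a S' nonempty for S, S' outside SS₀
  have haa : ∀ S ∈ SS, S ∉ SS₀ → ∀ S' ∈ SS, S' ∉ SS₀ → (a S ∩ a S').Nonempty := by
    intro S hS hS0 S' hS' hS'0
    obtain ⟨P, hP, hPsub⟩ := key S' hS' hS'0 v.1 hv0
    obtain ⟨x, hx⟩ := (ha S hS hS0).2 v.1 hv0 P hP
    exact ⟨x, hx.1, hPsub hx.2⟩
  have hvert : IsVertex SS φ₀ := by
    constructor
    · intro S hS
      by_cases h : S ∈ SS₀
      · simp only [hφ₀, if_pos h]; exact hφ.1 S hS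
      · simp only [hφ₀, if_neg h]; exact (ha S hS h).1
    · intro S hS S' hS'
      by_cases h : S ∈ SS₀ <;> by_cases h' : S' ∈ SS₀
      · simp only [hφ₀, if_pos h, if_pos h']
        exact hφ.2 S hS S' hS'
      · simp only [hφ₀, if_pos h, if_neg h']
        obtain ⟨x, hx⟩ := (ha S' hS' h').2 S h (φ S) (hφ.1 S hS)
        exact ⟨x, hx.2, hx.1⟩
      · simp only [hφ₀, if_neg h, if_pos h']
        exact (ha S hS h).2 S' h' (φ S') (hφ.1 S' hS')
      · simp only [hφ₀, if_neg h, if_neg h']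
        exact haa S hS h S' hS' h'
  refine ⟨hvert, fun S _ h => if_neg h, ?_⟩
  intro ψ hψ hψa
  have hunion : Delta SS φ ψ = Delta SS φ φ₀ ∪ Delta SS φ₀ ψ := by
    ext S
    simp only [Delta, Set.mem_setOf_eq, Set.mem_union, hφ₀]
    constructor
    · rintro ⟨hS, hne⟩
      by_cases h : S ∈ SS₀
      · right; refine ⟨hS, ?_⟩; simp only [if_pos h]; exact hne
      · left; refine ⟨hS, ?_⟩; simp only [if_neg h]
        rw [← hψa S hS h]; exact hne
    · rintro (⟨hS, hne⟩ | ⟨hS, hne⟩)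
      · refine ⟨hS, ?_⟩
        by_cases h : S ∈ SS₀
        · simp only [if_pos h] at hne; exact absurd rfl hne
        · simp only [if_neg h] at hne
          rw [hψa S hS h]; exact hne
      · refine ⟨hS, ?_⟩
        by_cases h : S ∈ SS₀
        · simp only [if_pos h] at hne; exact hne
        · simp only [if_neg h] at hne
          rw [hψa S hS h] at hne; exact absurd rfl hne
  have hdisj : Disjoint (Delta SS φ φ₀) (Delta SS φ₀ ψ) := by
    rw [Set.disjoint_left]
    rintro S ⟨hS, h1⟩ ⟨_, h2⟩
    by_cases h : S ∈ SS₀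
    · simp only [hφ₀, if_pos h] at h1; exact h1 rfl
    · simp only [hφ₀, if_neg h] at h2
      rw [hψa S hS h] at h2; exact h2 rfl
  rw [hunion, Set.ncard_union_eq hdisj (Set.toFinite _) (Set.toFinite _)]
end
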